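/- arXiv:1607.06630 — 3 statements merged into one kernel-verified Lean document; each statement's English description precedes it below -/
import Mathlib

section
/- Let V : ℝⁿ → ℝ be a smooth function and let p be a stable stationary point of V, i.e. a critical point at which the Hessian bilinear form of V is positive definite. Then there exist an open neighborhood U of p, an open neighborhood W of 0 in ℝⁿ, and a smooth diffeomorphism φ : U → W with φ(p) = 0, such that for every point p' ∈ U one has V(p') = V(p) + x₁² + ⋯ + x_n², where (x₁,…,x_n) = φ(p'). -/
set_option maxHeartbeats 2000000
set_option synthInstance.maxHeartbeats 400000
set_option linter.unusedSectionVars false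

noncomputable section MorseAuxSection

open scoped RealInnerProductSpace
open ContinuousLinearMap

namespace MorseAux

variable {E : Type*} [NormedAddCommGroup E] [InnerProductSpace ℝ E] [FiniteDimensional ℝ E]

private local instance i1 : NormedAddCommGroup (E →L[ℝ] E) := inferInstance
private local instance i2 : NormedAddCommGroup (E →L[ℝ] ℝ) := inferInstance
private local instance i3 : NormedSpace ℝ (E →L[ℝ] E) := inferInstance
private local instance i4 : NormedSpace ℝ (E →L[ℝ] ℝ) := inferInstance
private local instance i5 : NormedAddCommGroup (E →L[ℝ] (E →L[ℝ] ℝ)) := inferInstance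
private local instance i6 : NormedSpace ℝ (E →L[ℝ] (E →L[ℝ] ℝ)) := inferInstance

variable (E) in
private def eE : (E →L[ℝ] ℝ) →L[ℝ] E :=
  ((InnerProductSpace.toDual ℝ E).symm.toLinearIsometry).toContinuousLinearMap

private lemma inner_eE (φ : E →L[ℝ] ℝ) (w : E) : ⟪eE E φ, w⟫ = φ w := by
  simp [eE, InnerProductSpace.toDual_symm_apply]

variable (E) in
private def postE : (E →L[ℝ] (E →L[ℝ] ℝ)) →L[ℝ] (E →L[ℝ] E) :=
  ContinuousLinearMap.compL ℝ E (E →L[ℝ] ℝ) E (eE E)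

variable (E) in
private def flipE : (E →L[ℝ] (E →L[ℝ] ℝ)) →L[ℝ] (E →L[ℝ] (E →L[ℝ] ℝ)) :=
  ((ContinuousLinearMap.flipₗᵢ ℝ E E ℝ).toLinearIsometry).toContinuousLinearMap

private lemma flipE_apply (T : E →L[ℝ] (E →L[ℝ] ℝ)) (u w : E) : flipE E T u w = T w u := rfl

universe u

private lemma contDiff_param_aux {X : Type u} [NormedAddCommGroup X] [NormedSpace ℝ X]
    [FiniteDimensional ℝ X] (k : ℕ) :
    ∀ (G : Type u) [NormedAddCommGroup G] [NormedSpace ℝ G] [CompleteSpace G] (f : X × ℝ → G),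
      ContDiff ℝ (⊤ : ℕ∞) f → ContDiff ℝ k (fun x => ∫ t in (0:ℝ)..1, f (x, t)) := by
  induction k with
  | zero =>
    intro G _ _ _ f hf
    have h0 : ContDiff ℝ 0 (fun x => ∫ t in (0:ℝ)..1, f (x, t)) := contDiff_zero.2
      (intervalIntegral.continuous_parametric_intervalIntegral_of_continuous'
        (f := fun x t => f (x, t)) hf.continuous 0 1)
    exact_mod_cast h0
  | succ k ih =>
    intro G _ _ _ f hf
    have hfd : ContDiff ℝ (⊤ : ℕ∞) (fderiv ℝ f) := (contDiff_infty_iff_fderiv.1 hf).2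
    have hfdiff : Differentiable ℝ f := (contDiff_infty_iff_fderiv.1 hf).1
    set L : X →L[ℝ] X × ℝ := (ContinuousLinearMap.id ℝ X).prod 0 with hL
    set D : X × ℝ → (X →L[ℝ] G) := fun z => (fderiv ℝ f z).comp L with hD
    have hDcd : ContDiff ℝ (⊤ : ℕ∞) D := hfd.clm_comp contDiff_const
    have hderiv : ∀ x₀ : X, HasFDerivAt (fun x => ∫ t in (0:ℝ)..1, f (x, t))
        (∫ t in (0:ℝ)..1, D (x₀, t)) x₀ := by
      intro x₀
      have hK : IsCompact (Metric.closedBall x₀ 1 ×ˢ Set.Icc (0:ℝ) 1) :=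
        (isCompact_closedBall x₀ 1).prod isCompact_Icc
      obtain ⟨C, hC⟩ := hK.exists_bound_of_continuousOn hDcd.continuous.continuousOn
      refine intervalIntegral.hasFDerivAt_integral_of_dominated_of_fderiv_le
        (μ := MeasureTheory.volume) (F := fun x t => f (x, t)) (F' := fun x t => D (x, t))
        (bound := fun _ => C) (s := Metric.closedBall x₀ 1)
        (Metric.closedBall_mem_nhds x₀ one_pos) ?_ ?_ ?_ ?_ ?_ ?_
      · exact Filter.Eventually.of_forall (fun x =>
          (hf.continuous.comp (continuous_const.prodMk continuous_id)).aestronglyMeasurable)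
      · exact (hf.continuous.comp (continuous_const.prodMk continuous_id)).intervalIntegrable _ _
      · exact (hDcd.continuous.comp (continuous_const.prodMk continuous_id)).aestronglyMeasurable
      · refine Filter.Eventually.of_forall (fun t ht x hx => hC (x, t) ⟨hx, ?_⟩)
        rw [Set.uIoc_of_le zero_le_one] at ht
        exact ⟨ht.1.le, ht.2⟩
      · exact intervalIntegrable_const
      · refine Filter.Eventually.of_forall (fun t _ x _ => ?_)
        have h1 : HasFDerivAt (fun x : X => (x, t)) L x :=
          (hasFDerivAt_id x).prodMk (hasFDerivAt_const t x)
        exact (hfdiff (x, t)).hasFDerivAt.comp x h1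
    have hfd_eq : fderiv ℝ (fun x => ∫ t in (0:ℝ)..1, f (x, t)) =
        fun x => ∫ t in (0:ℝ)..1, D (x, t) := funext fun x => (hderiv x).fderiv
    rw [show ((k + 1 : ℕ) : WithTop ℕ∞) = (k : WithTop ℕ∞) + 1 by push_cast; rfl,
      contDiff_succ_iff_fderiv]
    refine ⟨fun x => (hderiv x).differentiableAt, fun h => absurd h (by simp), ?_⟩
    rw [hfd_eq]
    exact ih (X →L[ℝ] G) D hDcd

variable (E) in
private def symL : (E →L[ℝ] (E →L[ℝ] ℝ)) →L[ℝ] (E →L[ℝ] E) :=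
  (postE E).comp ((1/2 : ℝ) • (ContinuousLinearMap.id ℝ _ + flipE E))

private lemma inner_symL (T : E →L[ℝ] (E →L[ℝ] ℝ)) (u w : E) :
    ⟪symL E T u, w⟫ = (1/2 : ℝ) * (T u w + T w u) := by
  simp only [symL, ContinuousLinearMap.comp_apply]
  rw [postE]
  simp only [ContinuousLinearMap.compL_apply, ContinuousLinearMap.comp_apply, inner_eE]
  simp [flipE_apply]
  ring

/-- Existence of a positive-definite symmetric square root, with the bijectivity of the
associated Sylvester/Lyapunov operator. -/
private lemma sqrt_exists (T : E →L[ℝ] E) (hsym : ∀ u w, ⟪T u, w⟫ = ⟪u, T w⟫)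
    (hpos : ∀ u, u ≠ 0 → 0 < ⟪T u, u⟫) :
    ∃ R : E →L[ℝ] E, R * R = T ∧ (∀ u w, ⟪R u, w⟫ = ⟪u, R w⟫) ∧
      (∀ u, u ≠ 0 → 0 < ⟪R u, u⟫) ∧ Function.Bijective R ∧
      Function.Bijective (fun H : E →L[ℝ] E => R * H + H * R) := by
  have hTsym : (T : E →ₗ[ℝ] E).IsSymmetric := fun u w => hsym u w
  set m := Module.finrank ℝ E with hm
  set b := hTsym.eigenvectorBasis (rfl : Module.finrank ℝ E = m) with hb
  set μ : Fin m → ℝ := hTsym.eigenvalues rfl with hμ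
  have hTb : ∀ i, T (b i) = μ i • b i := by
    intro i
    exact_mod_cast hTsym.apply_eigenvectorBasis (rfl : Module.finrank ℝ E = m) i
  have hb1 : ∀ i j, ⟪b i, b j⟫ = if i = j then 1 else 0 :=
    fun i j => orthonormal_iff_ite.mp b.orthonormal i j
  have hbne : ∀ i, b i ≠ 0 := fun i => b.toBasis.ne_zero i
  have hμpos : ∀ i, 0 < μ i := by
    intro i
    have h1 : ⟪T (b i), b i⟫ = μ i := by
      rw [hTb, real_inner_smul_left, hb1]
      simp
    rw [← h1]
    exact hpos (b i) (hbne i)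
  set R : E →L[ℝ] E := ∑ i, Real.sqrt (μ i) • (innerSL ℝ (b i)).smulRight (b i) with hR
  have hRapp : ∀ v, R v = ∑ i, (Real.sqrt (μ i) * ⟪b i, v⟫) • b i := by
    intro v
    rw [hR]
    simp [ContinuousLinearMap.sum_apply, smul_smul]
  have hRb : ∀ j, R (b j) = Real.sqrt (μ j) • b j := by
    intro j
    rw [hRapp]
    rw [Finset.sum_eq_single j]
    · rw [hb1]; simp
    · intro i _ hij
      rw [hb1]; simp [hij]
    · simp
  have hinnerR : ∀ u w, ⟪R u, w⟫ = ∑ i, Real.sqrt (μ i) * (⟪b i, u⟫ * ⟪b i, w⟫) := by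
    intro u w
    rw [hRapp, sum_inner]
    congr 1; funext i
    rw [real_inner_smul_left]; ring
  have hRsym : ∀ u w, ⟪R u, w⟫ = ⟪u, R w⟫ := by
    intro u w
    have h2 : ⟪u, R w⟫ = ⟪R w, u⟫ := real_inner_comm _ _
    rw [h2, hinnerR, hinnerR]
    congr 1; funext i; ring
  have hRpos : ∀ u, u ≠ 0 → 0 < ⟪R u, u⟫ := by
    intro u hu
    rw [hinnerR]
    have hex : ∃ i, ⟪b i, u⟫ ≠ 0 := by
      by_contra hc
      push_neg at hc
      apply hu
      have := b.sum_repr u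
      rw [← this]
      apply Finset.sum_eq_zero
      intro i _
      rw [b.repr_apply_apply, hc i, zero_smul]
    obtain ⟨i0, hi0⟩ := hex
    apply Finset.sum_pos'
    · intro i _
      have : 0 ≤ ⟪b i, u⟫ * ⟪b i, u⟫ := mul_self_nonneg _
      positivity
    · refine ⟨i0, Finset.mem_univ _, ?_⟩
      have h1 : 0 < Real.sqrt (μ i0) := Real.sqrt_pos.mpr (hμpos i0)
      have h2 : 0 < ⟪b i0, u⟫ * ⟪b i0, u⟫ := mul_self_pos.mpr hi0
      positivity
  have hRT : R * R = T := by
    apply ContinuousLinearMap.coe_injective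
    apply Module.Basis.ext b.toBasis
    intro j
    have : (R * R) (b j) = T (b j) := by
      rw [ContinuousLinearMap.mul_apply, hRb, map_smul, hRb, hTb, smul_smul,
        Real.mul_self_sqrt (le_of_lt (hμpos j))]
    simpa using this
  have hRne : ∀ u, u ≠ 0 → R u ≠ 0 := by
    intro u hu hru
    have := hRpos u hu
    rw [hru, inner_zero_left] at this
    exact lt_irrefl 0 this
  have hRinj : Function.Injective R := by
    intro u v huv
    by_contra hne
    have h1 : u - v ≠ 0 := sub_ne_zero.mpr hne
    have h2 : R (u - v) = 0 := by rw [map_sub, huv, sub_self]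
    exact hRne _ h1 h2
  have hRbij : Function.Bijective R :=
    ⟨hRinj, (LinearMap.injective_iff_surjective.mp hRinj : Function.Surjective (R : E →ₗ[ℝ] E))⟩
  refine ⟨R, hRT, hRsym, hRpos, hRbij, ?_⟩
  -- Lyapunov operator bijectivity
  set L : (E →L[ℝ] E) →ₗ[ℝ] (E →L[ℝ] E) :=
    { toFun := fun H => R * H + H * R
      map_add' := by intro H1 H2; simp [mul_add, add_mul]; abel
      map_smul' := by intro c H; simp [mul_smul_comm, smul_mul_assoc, smul_add] } with hL
  have hLinj : Function.Injective L := by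
    rw [← LinearMap.ker_eq_bot, LinearMap.ker_eq_bot']
    intro H hH
    have hHb : ∀ j, H (b j) = 0 := by
      intro j
      by_contra hne
      have h0 : (R * H + H * R) (b j) = 0 := by rw [show R * H + H * R = L H from rfl, hH]; rfl
      have h1 : R (H (b j)) + Real.sqrt (μ j) • H (b j) = 0 := by
        have := h0
        simp only [ContinuousLinearMap.add_apply, ContinuousLinearMap.mul_apply] at this
        rw [hRb, map_smul] at this
        exact this
      have h2 : ⟪R (H (b j)), H (b j)⟫ = -(Real.sqrt (μ j) * ⟪H (b j), H (b j)⟫) := by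
        have : R (H (b j)) = -(Real.sqrt (μ j) • H (b j)) := by linear_combination (norm := module) h1
        rw [this, inner_neg_left, real_inner_smul_left]
      have h3 : 0 < ⟪R (H (b j)), H (b j)⟫ := hRpos _ hne
      have h4 : 0 < Real.sqrt (μ j) := Real.sqrt_pos.mpr (hμpos j)
      have h5 : 0 < ⟪H (b j), H (b j)⟫ := by
        rw [real_inner_self_eq_norm_sq]
        exact pow_pos (norm_pos_iff.mpr hne) 2
      nlinarith
    apply ContinuousLinearMap.coe_injective
    apply Module.Basis.ext b.toBasis
    intro j
    simpa using hHb j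
  have hLsurj : Function.Surjective L := LinearMap.injective_iff_surjective.mp hLinj
  exact ⟨hLinj, hLsurj⟩


open scoped NNReal ENNReal in
private theorem morse_aux {E : Type*} [NormedAddCommGroup E] [InnerProductSpace ℝ E]
    [FiniteDimensional ℝ E] (V : E → ℝ) (hV : ContDiff ℝ (⊤ : ℕ∞) V) (p : E)
    (hcrit : fderiv ℝ V p = 0)
    (hposdef : ∀ v, v ≠ 0 → 0 < fderiv ℝ (fderiv ℝ V) p v v) :
    ∃ (U W : Set E) (φ ψ : E → E),
      IsOpen U ∧ IsOpen W ∧ p ∈ U ∧ (0 : E) ∈ W ∧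
      ContDiffOn ℝ (⊤ : ℕ∞) φ U ∧ ContDiffOn ℝ (⊤ : ℕ∞) ψ W ∧
      Set.MapsTo φ U W ∧ Set.MapsTo ψ W U ∧
      (∀ x ∈ U, ψ (φ x) = x) ∧ (∀ y ∈ W, φ (ψ y) = y) ∧
      φ p = 0 ∧
      (∀ p' ∈ U, V p' = V p + ‖φ p'‖ ^ 2) := by
  classical
  have hV1 := contDiff_infty_iff_fderiv.1 hV
  have hV2 := contDiff_infty_iff_fderiv.1 hV1.2
  set H : E → (E →L[ℝ] (E →L[ℝ] ℝ)) := fderiv ℝ (fderiv ℝ V) with hHdef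
  have hHcd : ContDiff ℝ (⊤ : ℕ∞) H := hV2.2
  have hHc : Continuous H := hHcd.continuous
  set ρ : ℝ≥0 := 1 with hρdef
  have hρpos : 0 < (ρ : ℝ) := by simp [hρdef]
  set M : E → (E →L[ℝ] (E →L[ℝ] ℝ)) := fun x => ∫ t in (0:ℝ)..1, (1 - t) • H (p + t • x)
    with hMdef
  have hMcd : ContDiff ℝ (⊤ : ℕ∞) M := by
    apply contDiff_infty.2
    intro k
    exact contDiff_param_aux k _ (fun z : E × ℝ => (1 - z.2) • H (p + z.2 • z.1))
      ((contDiff_const.sub contDiff_snd).smul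
        (hHcd.comp (contDiff_const.add (contDiff_snd.smul contDiff_fst))))
  set A : E → (E →L[ℝ] E) := fun x => symL E (M x) with hAdef
  have hAsmooth : ContDiff ℝ (⊤ : ℕ∞) A := (symL E).contDiff.comp hMcd
  have hAcd : ContDiffAt ℝ (⊤ : ℕ∞) A 0 := hAsmooth.contDiffAt
  have hAcont : ContinuousOn A (Metric.ball 0 (ρ : ℝ)) := hAsmooth.continuous.continuousOn
  have hcontInt : ∀ x : E, Continuous fun t : ℝ => (1 - t) • H (p + t • x) := fun x =>
    (continuous_const.sub continuous_id).smul
      (hHc.comp (continuous_const.add (continuous_id.smul continuous_const)))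
  have hMapp : ∀ x u w : E, M x u w = ∫ t in (0:ℝ)..1, (1 - t) * H (p + t • x) u w := by
    intro x u w
    simp only [hMdef]
    rw [ContinuousLinearMap.intervalIntegral_apply ((hcontInt x).intervalIntegrable _ _),
      ContinuousLinearMap.intervalIntegral_apply
        (((hcontInt x).clm_apply continuous_const).intervalIntegrable _ _)]
    simp
  have hAin : ∀ x u w : E, ⟪A x u, w⟫ = (1/2 : ℝ) * (M x u w + M x w u) :=
    fun x u w => inner_symL _ u w
  have hAsa : ∀ x : E, ‖x‖ < (ρ : ℝ) → ∀ u w, ⟪A x u, w⟫ = ⟪u, A x w⟫ := by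
    intro x _ u w
    rw [← real_inner_comm u (A x w), hAin, hAin]
    ring
  have hdiag : ∀ x : E, ‖x‖ < (ρ : ℝ) → ⟪x, A x x⟫ = V (p + x) - V p := by
    intro x _
    have hg : ∀ t : ℝ, HasDerivAt (fun s : ℝ => p + s • x) x t := fun t => by
      simpa using ((hasDerivAt_id t).smul_const x).const_add p
    have hg0 : ∀ t : ℝ, HasDerivAt (fun s => V (p + s • x)) (fderiv ℝ V (p + t • x) x) t :=
      fun t => (hV1.1 (p + t • x)).hasFDerivAt.comp_hasDerivAt t (hg t)
    have hg1 : ∀ t : ℝ, HasDerivAt (fun s => fderiv ℝ V (p + s • x) x) (H (p + t • x) x x) t := by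
      intro t
      have h1 : HasDerivAt (fun s => fderiv ℝ V (p + s • x)) (H (p + t • x) x) t :=
        (hV2.1 (p + t • x)).hasFDerivAt.comp_hasDerivAt t (hg t)
      simpa using h1.clm_apply (hasDerivAt_const t x)
    have hΦ : ∀ t ∈ Set.uIcc (0:ℝ) 1, HasDerivAt
        (fun s => V (p + s • x) + (1 - s) * fderiv ℝ V (p + s • x) x)
        ((1 - t) * H (p + t • x) x x) t := by
      intro t _
      have := (hg0 t).add (((hasDerivAt_const t (1:ℝ)).sub (hasDerivAt_id' t)).mul (hg1 t))
      exact this.congr_deriv (by simp only [Pi.sub_apply]; ring)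
    have key : ∫ t in (0:ℝ)..1, (1 - t) * H (p + t • x) x x = V (p + x) - V p := by
      rw [intervalIntegral.integral_eq_sub_of_hasDerivAt hΦ]
      · simp [hcrit]
      · exact ((continuous_const.sub continuous_id).mul
          (((hHc.comp (continuous_const.add (continuous_id.smul continuous_const))).clm_apply
            continuous_const).clm_apply continuous_const)).intervalIntegrable _ _
    rw [real_inner_comm, hAin, hMapp, key]
    ring
  have hA0pos : ∀ v : E, v ≠ 0 → 0 < ⟪A 0 v, v⟫ := by
    intro v hv
    rw [hAin, hMapp]
    have hI : ∫ t in (0:ℝ)..1, (1 - t) = (1/2 : ℝ) := by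
      rw [intervalIntegral.integral_sub intervalIntegrable_const
        intervalIntegral.intervalIntegrable_id]
      norm_num
    have h0 : ∫ t in (0:ℝ)..1, (1 - t) * H (p + t • (0:E)) v v = (1/2) * H p v v := by
      simp only [smul_zero, add_zero]
      rw [intervalIntegral.integral_mul_const, hI]
    rw [h0]
    have := hposdef v hv
    linarith
  have hA0sa : ∀ u w : E, ⟪A 0 u, w⟫ = ⟪u, A 0 w⟫ := by
    intro u w
    exact hAsa 0 (by simpa using hρpos) u w
  -- square root of A 0
  obtain ⟨R₀, hR₀sq, hR₀sym, hR₀pos, hR₀bij, hLyapbij⟩ := sqrt_exists (A 0) hA0sa hA0pos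
  -- inverse function theorem for squaring
  have hmsq : ContDiff ℝ (⊤ : ℕ∞) (fun B : E →L[ℝ] E => B * B) := contDiff_id.mul contDiff_id
  set Dd : (E →L[ℝ] E) →L[ℝ] (E →L[ℝ] E) :=
    R₀ • ContinuousLinearMap.id ℝ (E →L[ℝ] E)
      + (ContinuousLinearMap.id ℝ (E →L[ℝ] E)).smulRight R₀ with hDd
  have hDdapp : ∀ H : E →L[ℝ] E, Dd H = R₀ * H + H * R₀ := by
    intro H
    rw [hDd]
    simp [smul_eq_mul]
  have hstrict : HasStrictFDerivAt (fun B : E →L[ℝ] E => B * B) Dd R₀ :=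
    (hasStrictFDerivAt_id R₀).mul' (hasStrictFDerivAt_id R₀)
  have hDdbij : Function.Bijective Dd := by
    have h : (Dd : (E →L[ℝ] E) → (E →L[ℝ] E)) = fun H => R₀ * H + H * R₀ := funext hDdapp
    rw [h]
    exact hLyapbij
  set ℓD : (E →L[ℝ] E) ≃L[ℝ] (E →L[ℝ] E) :=
    LinearEquiv.toContinuousLinearEquiv
      (LinearEquiv.ofBijective (Dd : (E →L[ℝ] E) →ₗ[ℝ] (E →L[ℝ] E)) hDdbij) with hℓDdef
  have hℓD : (ℓD : (E →L[ℝ] E) →L[ℝ] (E →L[ℝ] E)) = Dd := by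
    ext H
    rfl
  have hsqAt : ContDiffAt ℝ (⊤ : ℕ∞) (fun B : E →L[ℝ] E => B * B) R₀ := hmsq.contDiffAt
  have hfdsq : HasFDerivAt (fun B : E →L[ℝ] E => B * B)
      (ℓD : (E →L[ℝ] E) →L[ℝ] (E →L[ℝ] E)) R₀ := by
    rw [hℓD]
    exact hstrict.hasFDerivAt
  set Psq := hsqAt.toOpenPartialHomeomorph _ hfdsq (by simp) with hPsqdef
  set Sq : (E →L[ℝ] E) → (E →L[ℝ] E) := ⇑Psq.symm with hSqdef
  have hPsqcoe : (Psq : (E →L[ℝ] E) → (E →L[ℝ] E)) = fun B => B * B := rfl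
  have hSqcd : ContDiffAt ℝ (⊤ : ℕ∞) Sq (A 0) := by
    have h := hsqAt.to_localInverse hfdsq (by simp)
    rw [show R₀ * R₀ = A 0 from hR₀sq] at h
    exact h
  have hR₀mem : R₀ ∈ Psq.source := hsqAt.mem_toOpenPartialHomeomorph_source hfdsq (by simp)
  have hA0mem : A 0 ∈ Psq.target := by
    have h := Psq.map_source hR₀mem
    rwa [show Psq R₀ = A 0 from hR₀sq] at h
  have hSqA0 : Sq (A 0) = R₀ := by
    have h := Psq.left_inv hR₀mem
    rwa [show Psq R₀ = A 0 from hR₀sq] at h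
  have hright : ∀ y ∈ Psq.target, Sq y * Sq y = y := by
    intro y hy
    have := Psq.right_inv hy
    rwa [hPsqcoe] at this
  obtain ⟨δ, δpos, hδsub⟩ := (Metric.isOpen_iff.1 Psq.open_source) R₀ hR₀mem
  -- selfadjointness tools
  have hadj_of : ∀ a : E →L[ℝ] E, (∀ u w, ⟪a u, w⟫ = ⟪u, a w⟫) →
      ContinuousLinearMap.adjoint a = a := by
    intro a ha
    ext u
    apply ext_inner_right ℝ
    intro w
    rw [ContinuousLinearMap.adjoint_inner_left]
    exact (ha u w).symm
  have hadjR₀ : ContinuousLinearMap.adjoint R₀ = R₀ := hadj_of R₀ hR₀sym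
  -- good region
  set s1 : Set E := Metric.ball 0 (ρ : ℝ) ∩ A ⁻¹' Psq.target with hs1def
  have hs1open : IsOpen s1 := hAcont.isOpen_inter_preimage Metric.isOpen_ball Psq.open_target
  have h0s1 : (0 : E) ∈ s1 := by
    constructor
    · simpa using hρpos
    · simpa using hA0mem
  have hcont2 : ContinuousOn (fun x => Sq (A x)) s1 := by
    apply Psq.continuousOn_symm.comp (hAcont.mono Set.inter_subset_left)
    intro x hx
    exact hx.2
  set s2 : Set E := s1 ∩ (fun x => Sq (A x)) ⁻¹' Metric.ball R₀ δ with hs2def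
  have hs2open : IsOpen s2 := hcont2.isOpen_inter_preimage hs1open Metric.isOpen_ball
  have h0s2 : (0 : E) ∈ s2 := by
    refine ⟨h0s1, ?_⟩
    simp only [Set.mem_preimage, hSqA0]
    exact Metric.mem_ball_self δpos
  have hs2norm : ∀ x ∈ s2, ‖x‖ < (ρ : ℝ) := by
    intro x hx
    have := hx.1.1
    rwa [Metric.mem_ball, dist_zero_right] at this
  have hs2prop : ∀ x ∈ s2, (Sq (A x)) * (Sq (A x)) = A x ∧
      ContinuousLinearMap.adjoint (Sq (A x)) = Sq (A x) := by
    intro x hx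
    have hAx : A x ∈ Psq.target := hx.1.2
    have hRx : Sq (A x) * Sq (A x) = A x := hright _ hAx
    have hRxmem : Sq (A x) ∈ Psq.source := hδsub hx.2
    have hadjmem : ContinuousLinearMap.adjoint (Sq (A x)) ∈ Psq.source := by
      apply hδsub
      have hdist : dist (ContinuousLinearMap.adjoint (Sq (A x))) R₀ = dist (Sq (A x)) R₀ := by
        conv_lhs => rw [← hadjR₀]
        exact LinearIsometryEquiv.dist_map _ _ _
      have hx2 := hx.2
      simp only [Set.mem_preimage, Metric.mem_ball] at hx2 ⊢
      rwa [hdist]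
    have hadjAx : ContinuousLinearMap.adjoint (A x) = A x :=
      hadj_of _ (hAsa x (hs2norm x hx))
    have heq2 : ContinuousLinearMap.adjoint (Sq (A x)) * ContinuousLinearMap.adjoint (Sq (A x))
        = Sq (A x) * Sq (A x) := by
      calc ContinuousLinearMap.adjoint (Sq (A x)) * ContinuousLinearMap.adjoint (Sq (A x))
          = ContinuousLinearMap.adjoint (Sq (A x) * Sq (A x)) :=
            (ContinuousLinearMap.adjoint_comp _ _).symm
        _ = ContinuousLinearMap.adjoint (A x) := by rw [hRx]
        _ = A x := hadjAx
        _ = Sq (A x) * Sq (A x) := hRx.symm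
    have heq : Psq (ContinuousLinearMap.adjoint (Sq (A x))) = Psq (Sq (A x)) := by
      show ContinuousLinearMap.adjoint (Sq (A x)) * ContinuousLinearMap.adjoint (Sq (A x))
        = Sq (A x) * Sq (A x)
      exact heq2
    exact ⟨hRx, Psq.injOn hadjmem hRxmem heq⟩
  -- the chart φ
  set φ : E → E := fun p' => Sq (A (p' - p)) (p' - p) with hφdef
  have hsubcd : ContDiffAt ℝ (⊤ : ℕ∞) (fun p' : E => p' - p) p :=
    (contDiff_id.sub contDiff_const).contDiffAt
  have hop : ContDiffAt ℝ (⊤ : ℕ∞) (fun p' : E => Sq (A (p' - p))) p := by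
    have hAat : ContDiffAt ℝ (⊤ : ℕ∞) (fun p' : E => A (p' - p)) p := by
      have h1 : ContDiffAt ℝ (⊤ : ℕ∞) A (p - p) := by rw [sub_self]; exact hAcd
      exact ContDiffAt.comp (g := A) (f := fun p' : E => p' - p) p h1 hsubcd
    have h2 : ContDiffAt ℝ (⊤ : ℕ∞) Sq (A (p - p)) := by rw [sub_self]; exact hSqcd
    exact ContDiffAt.comp (g := Sq) (f := fun p' : E => A (p' - p)) p h2 hAat
  have hφcd : ContDiffAt ℝ (⊤ : ℕ∞) φ p := hop.clm_apply hsubcd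
  have hφp : φ p = 0 := by
    rw [hφdef]
    simp
  set ℓR : E ≃L[ℝ] E :=
    LinearEquiv.toContinuousLinearEquiv
      (LinearEquiv.ofBijective (R₀ : E →ₗ[ℝ] E) hR₀bij) with hℓRdef
  have hℓR : (ℓR : E →L[ℝ] E) = R₀ := by
    ext u
    rfl
  have hφfd : HasFDerivAt φ (ℓR : E →L[ℝ] E) p := by
    have hder1 : HasFDerivAt (fun p' : E => Sq (A (p' - p)))
        (fderiv ℝ (fun p' : E => Sq (A (p' - p))) p) p :=
      (hop.differentiableAt (by simp)).hasFDerivAt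
    have hdersub : HasFDerivAt (fun p' : E => p' - p) (ContinuousLinearMap.id ℝ E) p :=
      (hasFDerivAt_id p).sub_const p
    have h := hder1.clm_apply hdersub
    have heq : (Sq (A (p - p))).comp (ContinuousLinearMap.id ℝ E)
        + (fderiv ℝ (fun p' : E => Sq (A (p' - p))) p).flip (p - p)
        = (ℓR : E →L[ℝ] E) := by
      rw [hℓR]
      ext u
      simp [sub_self, hSqA0]
    rwa [heq] at h
  set P := hφcd.toOpenPartialHomeomorph _ hφfd (by simp) with hPdef
  have hPcoe : (P : E → E) = φ := rfl
  set ψ : E → E := ⇑P.symm with hψdef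
  have hψcd : ContDiffAt ℝ (⊤ : ℕ∞) ψ 0 := by
    have h := hφcd.to_localInverse hφfd (by simp)
    rwa [hφp] at h
  have hpmem : p ∈ P.source := hφcd.mem_toOpenPartialHomeomorph_source hφfd (by simp)
  -- extract smooth open sets
  have hsqD := contDiff_infty_iff_fderiv.1 hmsq
  set Osq : Set (E →L[ℝ] E) := (fderiv ℝ (fun B : E →L[ℝ] E => B * B)) ⁻¹'
      Set.range ((↑) : ((E →L[ℝ] E) ≃L[ℝ] (E →L[ℝ] E)) → ((E →L[ℝ] E) →L[ℝ] (E →L[ℝ] E)))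
    with hOsqdef
  have hOsqopen : IsOpen Osq := ContinuousLinearEquiv.isOpen.preimage hsqD.2.continuous
  have hR₀Osq : R₀ ∈ Osq := ⟨ℓD, hfdsq.fderiv.symm⟩
  have hSqat : ∀ y ∈ Psq.target, Sq y ∈ Osq → ContDiffAt ℝ (⊤ : ℕ∞) Sq y := by
    intro y hy hyO
    obtain ⟨e, he⟩ := hyO
    have hd : HasFDerivAt (fun B : E →L[ℝ] E => B * B)
        (e : (E →L[ℝ] E) →L[ℝ] (E →L[ℝ] E)) (Sq y) := by
      rw [he]; exact (hsqD.1 (Sq y)).hasFDerivAt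
    exact Psq.contDiffAt_symm hy hd hmsq.contDiffAt
  have hφev : ∀ᶠ p' in nhds p, ContDiffAt ℝ (⊤ : ℕ∞) φ p' := by
    have hc1 : ContinuousAt (fun p' : E => A (p' - p)) p :=
      hAsmooth.continuous.continuousAt.comp (continuous_id.sub continuous_const).continuousAt
    have hc2 : ContinuousAt (fun p' : E => Sq (A (p' - p))) p := hop.continuousAt
    have h1 : ∀ᶠ p' in nhds p, A (p' - p) ∈ Psq.target := hc1.preimage_mem_nhds (by
      show Psq.target ∈ nhds (A (p - p))
      rw [sub_self]; exact Psq.open_target.mem_nhds hA0mem)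
    have h2 : ∀ᶠ p' in nhds p, Sq (A (p' - p)) ∈ Osq := hc2.preimage_mem_nhds (by
      show Osq ∈ nhds (Sq (A (p - p)))
      rw [sub_self, hSqA0]; exact hOsqopen.mem_nhds hR₀Osq)
    filter_upwards [h1, h2] with p' hp1 hp2
    have hS := hSqat _ hp1 hp2
    have hAat : ContDiffAt ℝ (⊤ : ℕ∞) (fun p' : E => A (p' - p)) p' :=
      hAsmooth.contDiffAt.comp p' (contDiff_id.sub contDiff_const).contDiffAt
    exact (hS.comp p' hAat).clm_apply (contDiff_id.sub contDiff_const).contDiffAt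
  obtain ⟨u₀n, hu₀n, hu₀cd⟩ : ∃ u ∈ nhds p, ContDiffOn ℝ (⊤ : ℕ∞) φ u :=
    ⟨_, hφev, fun x hx => ContDiffAt.contDiffWithinAt hx⟩
  have hφev2 : ∀ᶠ p' in nhds p, ContDiffAt ℝ (⊤ : ℕ∞) φ p' ∧
      fderiv ℝ φ p' ∈ Set.range ((↑) : (E ≃L[ℝ] E) → (E →L[ℝ] E)) := by
    have hfc : ContinuousAt (fderiv ℝ φ) p := hφcd.continuousAt_fderiv (by simp)
    have h3 : ∀ᶠ p' in nhds p, fderiv ℝ φ p' ∈ Set.range ((↑) : (E ≃L[ℝ] E) → (E →L[ℝ] E)) :=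
      hfc.preimage_mem_nhds (ContinuousLinearEquiv.isOpen.mem_nhds ⟨ℓR, hφfd.fderiv.symm⟩)
    exact hφev.and h3
  have hψp : ψ 0 = p := by
    have := P.left_inv hpmem
    rw [hPcoe, hφp] at this
    exact this
  have h0tgt : (0 : E) ∈ P.target := by
    have := P.map_source hpmem
    rwa [hPcoe, hφp] at this
  have hψev : ∀ᶠ y in nhds (0 : E), ContDiffAt ℝ (⊤ : ℕ∞) ψ y := by
    have hc : Filter.Tendsto ψ (nhds 0) (nhds p) := by
      have := hψcd.continuousAt.tendsto
      rwa [hψp] at this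
    filter_upwards [hc.eventually hφev2, P.open_target.mem_nhds h0tgt] with y hy hyt
    obtain ⟨hcd, e, he⟩ := hy
    have hd : HasFDerivAt φ (e : E →L[ℝ] E) (ψ y) := by
      rw [he]; exact (hcd.differentiableAt (by simp)).hasFDerivAt
    exact P.contDiffAt_symm hyt hd hcd
  obtain ⟨u₀, hu₀sub, hu₀open, hpu₀⟩ := mem_nhds_iff.1 hu₀n
  obtain ⟨w₀n, hw₀n, hw₀cd⟩ : ∃ w ∈ nhds (0 : E), ContDiffOn ℝ (⊤ : ℕ∞) ψ w :=
    ⟨_, hψev, fun x hx => ContDiffAt.contDiffWithinAt hx⟩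
  obtain ⟨w₀, hw₀sub, hw₀open, h0w₀⟩ := mem_nhds_iff.1 hw₀n
  set U1 : Set E := (u₀ ∩ P.source) ∩ {p' | p' - p ∈ s2} with hU1def
  have hU1open : IsOpen U1 := by
    apply IsOpen.inter (hu₀open.inter P.open_source)
    exact hs2open.preimage (continuous_id.sub continuous_const)
  have hpU1 : p ∈ U1 := ⟨⟨hpu₀, hpmem⟩, by simpa [sub_self] using h0s2⟩
  have hφcontU1 : ContinuousOn φ U1 := by
    apply ((hu₀cd.mono hu₀sub).continuousOn).mono
    intro x hx
    exact hx.1.1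
  set U : Set E := U1 ∩ φ ⁻¹' w₀ with hUdef
  have hUopen : IsOpen U := hφcontU1.isOpen_inter_preimage hU1open hw₀open
  have hpU : p ∈ U := ⟨hpU1, by simp only [Set.mem_preimage, hφp]; exact h0w₀⟩
  have hUsub : U ⊆ P.source := fun x hx => hx.1.1.2
  set W : Set E := P '' U with hWdef
  have hWopen : IsOpen W := P.isOpen_image_of_subset_source hUopen hUsub
  have h0W : (0 : E) ∈ W := ⟨p, hpU, hφp⟩
  have hWw₀ : W ⊆ w₀ := by
    rintro y ⟨x, hx, rfl⟩
    exact hx.2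
  refine ⟨U, W, φ, ψ, hUopen, hWopen, hpU, h0W, ?_, ?_, ?_, ?_, ?_, ?_, hφp, ?_⟩
  · exact (hu₀cd.mono hu₀sub).mono (fun x hx => hx.1.1.1)
  · exact (hw₀cd.mono hw₀sub).mono hWw₀
  · intro x hx
    exact ⟨x, hx, rfl⟩
  · rintro y ⟨x, hx, rfl⟩
    have := P.left_inv (hUsub hx)
    rw [hPcoe] at this
    show P.symm (φ x) ∈ U
    rw [this]
    exact hx
  · intro x hx
    have := P.left_inv (hUsub hx)
    rwa [hPcoe] at this
  · rintro y ⟨x, hx, rfl⟩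
    have := P.right_inv (P.map_source (hUsub hx))
    rw [hPcoe] at this ⊢
    exact this
  · intro p' hp'
    have hx2 : p' - p ∈ s2 := hp'.1.2
    obtain ⟨hRx, hRxadj⟩ := hs2prop _ hx2
    have hnx : ‖p' - p‖ < (ρ : ℝ) := hs2norm _ hx2
    have hd := hdiag _ hnx
    rw [add_sub_cancel] at hd
    have hinner : ⟪p' - p, A (p' - p) (p' - p)⟫ = ‖φ p'‖ ^ 2 := by
      rw [← hRx]
      have h1 : ⟪p' - p, (Sq (A (p' - p)) * Sq (A (p' - p))) (p' - p)⟫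
          = ⟪Sq (A (p' - p)) (p' - p), Sq (A (p' - p)) (p' - p)⟫ := by
        rw [ContinuousLinearMap.mul_apply]
        calc ⟪p' - p, Sq (A (p' - p)) (Sq (A (p' - p)) (p' - p))⟫
            = ⟪Sq (A (p' - p)) (Sq (A (p' - p)) (p' - p)), p' - p⟫ := real_inner_comm _ _
          _ = ⟪ContinuousLinearMap.adjoint (Sq (A (p' - p))) (Sq (A (p' - p)) (p' - p)),
                p' - p⟫ := by rw [hRxadj]
          _ = ⟪Sq (A (p' - p)) (p' - p), Sq (A (p' - p)) (p' - p)⟫ :=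
              ContinuousLinearMap.adjoint_inner_left _ _ _
      rw [h1]
      rw [real_inner_self_eq_norm_sq]
    rw [hinner] at hd
    linarith

end MorseAux

end MorseAuxSection



/-- Near a stable stationary point `p` (a critical point with positive definite Hessian) of a
smooth function `V : ℝⁿ → ℝ`, there is a smooth diffeomorphism `φ` of a neighborhood `U` of `p`
onto a neighborhood `W` of `0` with `φ p = 0`, in which `V = V p + x₁² + ⋯ + x_n²`. -/
theorem morse_lemma_stable_stationary_point
    (n : ℕ) (V : EuclideanSpace ℝ (Fin n) → ℝ) (hV : ContDiff ℝ (⊤ : ℕ∞) V)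
    (p : EuclideanSpace ℝ (Fin n))
    -- `p` is a critical point of `V`
    (hcrit : fderiv ℝ V p = 0)
    -- the Hessian bilinear form of `V` at `p` is positive definite
    (hposdef : ∀ v, v ≠ 0 → 0 < fderiv ℝ (fderiv ℝ V) p v v) :
    ∃ (U W : Set (EuclideanSpace ℝ (Fin n)))
      (φ ψ : EuclideanSpace ℝ (Fin n) → EuclideanSpace ℝ (Fin n)),
      IsOpen U ∧ IsOpen W ∧ p ∈ U ∧ (0 : EuclideanSpace ℝ (Fin n)) ∈ W ∧
      ContDiffOn ℝ (⊤ : ℕ∞) φ U ∧ ContDiffOn ℝ (⊤ : ℕ∞) ψ W ∧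
      Set.MapsTo φ U W ∧ Set.MapsTo ψ W U ∧
      (∀ x ∈ U, ψ (φ x) = x) ∧ (∀ y ∈ W, φ (ψ y) = y) ∧
      φ p = 0 ∧
      (∀ p' ∈ U, V p' = V p + ∑ i : Fin n, (φ p' i) ^ 2) := by
  obtain ⟨U, W, φ, ψ, h1, h2, h3, h4, h5, h6, h7, h8, h9, h10, h11, h12⟩ :=
    MorseAux.morse_aux V hV p hcrit hposdef
  refine ⟨U, W, φ, ψ, h1, h2, h3, h4, h5, h6, h7, h8, h9, h10, h11, ?_⟩
  intro p' hp'
  rw [h12 p' hp']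
  congr 1
  rw [EuclideanSpace.norm_eq (φ p'), Real.sq_sqrt (by positivity)]
  refine Finset.sum_congr rfl fun i _ => ?_
  rw [Real.norm_eq_abs, sq_abs]
end

section
/- (Gordon's completeness criterion, Euclidean version.) Let X : ℝⁿ → ℝⁿ be a C¹ vector field. Suppose there exist a C¹ function E : ℝⁿ → ℝ, a proper continuous function f : ℝⁿ → ℝ, and constants α, β ≥ 0 such that for all x ∈ ℝⁿ: (1) |dE_x(X(x))| ≤ α·|E(x)| and (2) |f(x)| ≤ β·|E(x)|. Then X is complete, i.e. every maximal integral curve of X (every maximal solution of γ'(t) = X(γ(t))) is defined on all of ℝ. -/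
/-!
Along an integral curve `γ`, the bound `|dE(X)| ≤ α |E|` and Grönwall's inequality give
`|E (γ t)| ≤ |E (γ t₀)| exp (α |t - t₀|)`; hence `|f ∘ γ|` is bounded on bounded time intervals
and, `f` being proper, `γ` stays in a compact set there. The Picard–Lindelöf existence time is
uniform over a compact set, so a solution can be continued past every finite boundary point of
its domain, and the domain of a maximal solution is a nonempty clopen subset of `ℝ`.
-/

open Set Metric Filter Topology

section Gronwall

variable {F : Type*} [NormedAddCommGroup F] [NormedSpace ℝ F] {g g' : ℝ → F} {K a b : ℝ}

theorem norm_le_mul_exp_of_norm_deriv_le (hab : a ≤ b)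
    (hg : ∀ u ∈ Icc a b, HasDerivAt g (g' u) u)
    (hbound : ∀ u ∈ Icc a b, ‖g' u‖ ≤ K * ‖g u‖) :
    ‖g b‖ ≤ ‖g a‖ * Real.exp (K * (b - a)) := by
  have h := norm_le_gronwallBound_of_norm_deriv_right_le (δ := ‖g a‖) (ε := 0)
    (fun u hu => (hg u hu).continuousAt.continuousWithinAt)
    (fun u hu => (hg u (Ico_subset_Icc_self hu)).hasDerivWithinAt) le_rfl
    (fun u hu => by simpa using hbound u (Ico_subset_Icc_self hu)) b ⟨hab, le_rfl⟩
  rwa [gronwallBound_ε0] at h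

theorem norm_le_mul_exp_abs_sub_of_norm_deriv_le
    (hg : ∀ u ∈ uIcc a b, HasDerivAt g (g' u) u)
    (hbound : ∀ u ∈ uIcc a b, ‖g' u‖ ≤ K * ‖g u‖) :
    ‖g b‖ ≤ ‖g a‖ * Real.exp (K * |b - a|) := by
  rcases le_total a b with hab | hba
  · rw [abs_of_nonneg (sub_nonneg.mpr hab)]
    rw [uIcc_of_le hab] at hg hbound
    exact norm_le_mul_exp_of_norm_deriv_le hab hg hbound
  · rw [abs_of_nonpos (sub_nonpos.mpr hba), neg_sub]
    rw [uIcc_of_ge hba] at hg hbound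
    have hmem : ∀ u ∈ Icc (-a) (-b), -u ∈ Icc b a := fun u hu =>
      ⟨by linarith [hu.2], by linarith [hu.1]⟩
    have h := norm_le_mul_exp_of_norm_deriv_le (g := fun u => g (-u)) (g' := fun u => -g' (-u))
      (K := K) (neg_le_neg hba)
      (fun u hu => by
        simpa [Function.comp_def] using (hg (-u) (hmem u hu)).scomp u (hasDerivAt_neg u))
      (fun u hu => by simpa using hbound (-u) (hmem u hu))
    simpa [sub_eq_neg_add, add_comm] using h

end Gronwall

section IntegralCurves

variable {H : Type*} [NormedAddCommGroup H] [NormedSpace ℝ H] {X : H → H} {γ σ : ℝ → H}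

theorem eventuallyEq_of_hasDerivAt_of_contDiffAt {t₀ : ℝ} (hX : ContDiffAt ℝ 1 X (γ t₀))
    (hγ : ∀ᶠ t in 𝓝 t₀, HasDerivAt γ (X (γ t)) t) (hσ : ∀ᶠ t in 𝓝 t₀, HasDerivAt σ (X (σ t)) t)
    (heq : γ t₀ = σ t₀) : γ =ᶠ[𝓝 t₀] σ := by
  obtain ⟨L, U, hU, hlip⟩ := hX.exists_lipschitzOnWith
  apply ODE_solution_unique_of_eventually (v := fun _ => X) (s := fun _ => U)
    (Eventually.of_forall fun _ => hlip) _ _ heq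
  · exact hγ.and (hγ.self_of_nhds.continuousAt.preimage_mem_nhds hU)
  · exact hσ.and (hσ.self_of_nhds.continuousAt.preimage_mem_nhds (heq ▸ hU))

theorem eqOn_of_hasDerivAt_of_isPreconnected (hX : ContDiff ℝ 1 X) {s : Set ℝ} (hs : IsOpen s)
    (hs' : IsPreconnected s) (hγ : ∀ t ∈ s, HasDerivAt γ (X (γ t)) t)
    (hσ : ∀ t ∈ s, HasDerivAt σ (X (σ t)) t) {t₀ : ℝ} (ht₀ : t₀ ∈ s) (heq : γ t₀ = σ t₀) :
    EqOn γ σ s := by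
  have hloc : ∀ t ∈ s, γ t = σ t → γ =ᶠ[𝓝 t] σ := fun t ht =>
    eventuallyEq_of_hasDerivAt_of_contDiffAt hX.contDiffAt
      (eventually_of_mem (hs.mem_nhds ht) hγ) (eventually_of_mem (hs.mem_nhds ht) hσ)
  suffices s ⊆ {t | γ =ᶠ[𝓝 t] σ} from fun t ht => (this ht).self_of_nhds
  refine hs'.subset_of_closure_inter_subset isOpen_setOfPred_eventually_nhds
    ⟨t₀, ht₀, hloc t₀ ht₀ heq⟩ fun t ⟨hcl, ht⟩ => hloc t ht ?_
  by_contra hne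
  have hsep : ∀ᶠ u in 𝓝 t, γ u ≠ σ u :=
    ((hγ t ht).continuousAt.prodMk (hσ t ht).continuousAt).eventually
      ((isClosed_diagonal (X := H)).isOpen_compl.mem_nhds hne)
  obtain ⟨u, hu, hne'⟩ := (mem_closure_iff_frequently.mp hcl).and_eventually hsep |>.exists
  exact hne' hu.self_of_nhds

theorem hasDerivAt_piecewise_of_isPreconnected_inter (hX : ContDiff ℝ 1 X) {s u : Set ℝ}
    [DecidablePred (· ∈ s)] (hs : IsOpen s) (hu : IsOpen u) (hsu : IsPreconnected (s ∩ u))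
    (hγ : ∀ t ∈ s, HasDerivAt γ (X (γ t)) t) (hσ : ∀ t ∈ u, HasDerivAt σ (X (σ t)) t)
    {t₁ : ℝ} (ht₁ : t₁ ∈ s ∩ u) (heq : γ t₁ = σ t₁) :
    ∀ t ∈ s ∪ u, HasDerivAt (s.piecewise γ σ) (X (s.piecewise γ σ t)) t := by
  have hγσ : EqOn γ σ (s ∩ u) := eqOn_of_hasDerivAt_of_isPreconnected hX (hs.inter hu) hsu
    (fun t ht => hγ t ht.1) (fun t ht => hσ t ht.2) ht₁ heq
  have hpσ : EqOn (s.piecewise γ σ) σ u := fun t ht => by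
    by_cases hts : t ∈ s
    · rw [piecewise_eq_of_mem _ _ _ hts, hγσ ⟨hts, ht⟩]
    · rw [piecewise_eq_of_notMem _ _ _ hts]
  rintro t (ht | ht)
  · rw [piecewise_eq_of_mem _ _ _ ht]
    exact (hγ t ht).congr_of_eventuallyEq
      ((piecewise_eqOn s γ σ).eventuallyEq_of_mem (hs.mem_nhds ht))
  · rw [hpσ ht]
    exact (hσ t ht).congr_of_eventuallyEq (hpσ.eventuallyEq_of_mem (hu.mem_nhds ht))

theorem IsCompact.exists_pos_forall_exists_eq_forall_mem_Ioo_hasDerivAt [CompleteSpace H]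
    (hX : ContDiff ℝ 1 X) {K : Set H} (hK : IsCompact K) :
    ∃ ε > (0 : ℝ), ∀ x ∈ K, ∀ t₀ : ℝ, ∃ σ : ℝ → H, σ t₀ = x ∧
      ∀ t ∈ Ioo (t₀ - ε) (t₀ + ε), HasDerivAt σ (X (σ t)) t := by
  refine hK.induction_on (p := fun S => ∃ ε > (0 : ℝ), ∀ x ∈ S, ∀ t₀ : ℝ, ∃ σ : ℝ → H,
    σ t₀ = x ∧ ∀ t ∈ Ioo (t₀ - ε) (t₀ + ε), HasDerivAt σ (X (σ t)) t)
    ⟨1, one_pos, by simp⟩ ?_ ?_ ?_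
  · rintro S T hST ⟨ε, hε, hT⟩
    exact ⟨ε, hε, fun x hx => hT x (hST hx)⟩
  · rintro S T ⟨ε, hε, hS⟩ ⟨δ, hδ, hT⟩
    have shrink : ∀ {η t₀ : ℝ}, min ε δ ≤ η →
        Ioo (t₀ - min ε δ) (t₀ + min ε δ) ⊆ Ioo (t₀ - η) (t₀ + η) := fun h =>
      Ioo_subset_Ioo (by linarith) (by linarith)
    refine ⟨min ε δ, lt_min hε hδ, fun x hx t₀ => ?_⟩
    obtain ⟨σ, hσ₀, hσ⟩ | ⟨σ, hσ₀, hσ⟩ := hx.imp (hS x · t₀) (hT x · t₀)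
    · exact ⟨σ, hσ₀, fun t ht => hσ t (shrink (min_le_left ε δ) ht)⟩
    · exact ⟨σ, hσ₀, fun t ht => hσ t (shrink (min_le_right ε δ) ht)⟩
  · intro x _
    obtain ⟨ε, hε, a, r, L, K, hr, hPL⟩ :=
      IsPicardLindelof.of_contDiffAt_one (hX.contDiffAt (x := x))
    refine ⟨closedBall x r, mem_nhdsWithin_of_mem_nhds (closedBall_mem_nhds x hr), ε, hε,
      fun y hy t₀ => ?_⟩
    obtain ⟨σ, hσ₀, hσ⟩ := (hPL t₀).exists_eq_forall_mem_Icc_hasDerivWithinAt hy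
    exact ⟨σ, hσ₀, fun t ht =>
      (hσ t (Ioo_subset_Icc_self ht)).hasDerivAt (Icc_mem_nhds ht.1 ht.2)⟩

theorem exists_extension_of_mem_closure [CompleteSpace H] (hX : ContDiff ℝ 1 X) {s : Set ℝ}
    (hs : IsOpen s) (hs' : IsPreconnected s) (hγ : ∀ t ∈ s, HasDerivAt γ (X (γ t)) t)
    {b δ : ℝ} (hb : b ∈ closure s) (hδ : 0 < δ) {K : Set H} (hK : IsCompact K)
    (hγK : MapsTo γ (s ∩ ball b δ) K) :
    ∃ γ' : ℝ → H, ∃ s' : Set ℝ, IsOpen s' ∧ IsPreconnected s' ∧ s ⊆ s' ∧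
      (∀ t ∈ s', HasDerivAt γ' (X (γ' t)) t) ∧ EqOn γ γ' s ∧ b ∈ s' := by
  classical
  obtain ⟨ε, hε, hlocal⟩ := hK.exists_pos_forall_exists_eq_forall_mem_Ioo_hasDerivAt hX
  obtain ⟨t₁, ht₁, hdist⟩ := Metric.mem_closure_iff.mp hb (min ε δ) (lt_min hε hδ)
  rw [Real.dist_eq, abs_sub_lt_iff] at hdist
  obtain ⟨σ, hσ₀, hσ⟩ := hlocal (γ t₁) (hγK ⟨ht₁, by
    rw [mem_ball, Real.dist_eq, abs_sub_lt_iff]; constructor <;> linarith [min_le_right ε δ]⟩) t₁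
  have ht₁u : t₁ ∈ Ioo (t₁ - ε) (t₁ + ε) := ⟨by linarith, by linarith⟩
  have hbu : b ∈ Ioo (t₁ - ε) (t₁ + ε) := by constructor <;> linarith [min_le_left ε δ]
  have hsu : IsPreconnected (s ∩ Ioo (t₁ - ε) (t₁ + ε)) :=
    ((isPreconnected_iff_ordConnected.mp hs').inter ordConnected_Ioo).isPreconnected
  exact ⟨s.piecewise γ σ, s ∪ Ioo (t₁ - ε) (t₁ + ε), hs.union isOpen_Ioo,
    hs'.union t₁ ht₁ ht₁u isPreconnected_Ioo, subset_union_left,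
    hasDerivAt_piecewise_of_isPreconnected_inter hX hs isOpen_Ioo hsu hγ hσ ⟨ht₁, ht₁u⟩ hσ₀.symm,
    (piecewise_eqOn s γ σ).symm, Or.inr hbu⟩

end IntegralCurves

section Gordon

variable {H : Type*} [NormedAddCommGroup H] [NormedSpace ℝ H] {X : H → H} {E : H → ℝ}
  {γ : ℝ → H} {s : Set ℝ} {α : ℝ}

theorem abs_comp_le_mul_exp_of_abs_fderiv_le (hE : Differentiable ℝ E)
    (h1 : ∀ x, |fderiv ℝ E x (X x)| ≤ α * |E x|) (hs : s.OrdConnected)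
    (hγ : ∀ t ∈ s, HasDerivAt γ (X (γ t)) t) {t₀ t : ℝ} (ht₀ : t₀ ∈ s) (ht : t ∈ s) :
    |E (γ t)| ≤ |E (γ t₀)| * Real.exp (α * |t - t₀|) := by
  simpa only [Real.norm_eq_abs, Function.comp_apply] using norm_le_mul_exp_abs_sub_of_norm_deriv_le
    (g := E ∘ γ) (g' := fun u => fderiv ℝ E (γ u) (X (γ u)))
    (fun u hu => (hE (γ u)).hasFDerivAt.comp_hasDerivAt u (hγ u (hs.uIcc_subset ht₀ ht hu)))
    (fun u _ => by simpa only [Real.norm_eq_abs, Function.comp_apply] using h1 (γ u))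

theorem exists_isCompact_mapsTo_of_isBounded (hE : Differentiable ℝ E) {f : H → ℝ}
    (hfproper : ∀ K : Set ℝ, IsCompact K → IsCompact (f ⁻¹' K)) {β : ℝ} (hα : 0 ≤ α)
    (hβ : 0 ≤ β) (h1 : ∀ x, |fderiv ℝ E x (X x)| ≤ α * |E x|) (h2 : ∀ x, |f x| ≤ β * |E x|)
    (hs : s.OrdConnected) (hγ : ∀ t ∈ s, HasDerivAt γ (X (γ t)) t) {t₀ : ℝ} (ht₀ : t₀ ∈ s)
    {T : Set ℝ} (hT : Bornology.IsBounded T) :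
    ∃ K : Set H, IsCompact K ∧ MapsTo γ (s ∩ T) K := by
  obtain ⟨R, hR⟩ := hT.subset_closedBall t₀
  set M := |E (γ t₀)| * Real.exp (α * R)
  refine ⟨f ⁻¹' Icc (-(β * M)) (β * M), hfproper _ isCompact_Icc, fun t ⟨ht, htT⟩ => ?_⟩
  have hEM : |E (γ t)| ≤ M := calc
    |E (γ t)| ≤ |E (γ t₀)| * Real.exp (α * |t - t₀|) :=
      abs_comp_le_mul_exp_of_abs_fderiv_le hE h1 hs hγ ht₀ ht
    _ ≤ |E (γ t₀)| * Real.exp (α * R) := by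
      have : |t - t₀| ≤ R := by simpa [Real.dist_eq] using hR htT
      gcongr
  exact abs_le.mp ((h2 _).trans (mul_le_mul_of_nonneg_left hEM hβ))

end Gordon

theorem gordon_completeness_general
    (n : ℕ) (X : EuclideanSpace ℝ (Fin n) → EuclideanSpace ℝ (Fin n))
    (hX : ContDiff ℝ 1 X)
    (E : EuclideanSpace ℝ (Fin n) → ℝ) (hE : ContDiff ℝ 1 E)
    (f : EuclideanSpace ℝ (Fin n) → ℝ)
    (hfproper : ∀ K : Set ℝ, IsCompact K → IsCompact (f ⁻¹' K))
    (α β : ℝ) (hα : 0 ≤ α) (hβ : 0 ≤ β)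
    (h1 : ∀ x, |fderiv ℝ E x (X x)| ≤ α * |E x|)
    (h2 : ∀ x, |f x| ≤ β * |E x|) :
    -- every maximal solution of `γ' t = X (γ t)`, defined on an open interval,
    -- is in fact defined on all of `ℝ`
    ∀ (γ : ℝ → EuclideanSpace ℝ (Fin n)) (s : Set ℝ),
      IsOpen s → IsPreconnected s →
      (∀ t ∈ s, HasDerivAt γ (X (γ t)) t) →
      -- maximality: any solution extending `γ` has the same domain
      (∀ (γ' : ℝ → EuclideanSpace ℝ (Fin n)) (s' : Set ℝ),
        IsOpen s' → IsPreconnected s' → s ⊆ s' →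
        (∀ t ∈ s', HasDerivAt γ' (X (γ' t)) t) → Set.EqOn γ γ' s → s' = s) →
      s = Set.univ := by
  intro γ s hs hconn hsol hmax
  obtain ⟨t₀, ht₀⟩ : s.Nonempty := by
    rw [nonempty_iff_ne_empty]
    rintro rfl
    obtain ⟨σ, -, ε, hε, hσ⟩ :=
      (hX.contDiffAt (x := 0)).exists_forall_mem_closedBall_exists_eq_forall_mem_Ioo_hasDerivAt₀ 0
    have hσ_dom := hmax σ _ isOpen_Ioo isPreconnected_Ioo (empty_subset _) hσ (eqOn_empty γ σ)
    exact (Ioo_eq_empty_iff.mp hσ_dom) (by linarith)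
  refine (isClopen_iff.mp ⟨closure_subset_iff_isClosed.mp fun b hb => ?_, hs⟩).resolve_left
    (nonempty_iff_ne_empty.mp ⟨t₀, ht₀⟩)
  obtain ⟨K, hK, hγK⟩ := exists_isCompact_mapsTo_of_isBounded (hE.differentiable one_ne_zero)
    hfproper hα hβ h1 h2 (isPreconnected_iff_ordConnected.mp hconn) hsol ht₀
    (isBounded_ball (x := b) (r := 1))
  obtain ⟨γ', s', hs'o, hs'c, hss', hsol', heq, hb'⟩ :=
    exists_extension_of_mem_closure hX hs hconn hsol hb one_pos hK hγK
  exact hmax γ' s' hs'o hs'c hss' hsol' heq ▸ hb'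

/-- **Gordon's completeness criterion** (Euclidean version). If a `C¹` vector field
`X : ℝⁿ → ℝⁿ` admits a `C¹` function `E`, a proper continuous function `f` and constants
`α, β ≥ 0` with `|dE_x (X x)| ≤ α |E x|` and `|f x| ≤ β |E x|` for all `x`, then `X` is
complete: every maximal integral curve of `X` is defined on all of `ℝ`. -/
theorem gordon_completeness
    (n : ℕ) (X : EuclideanSpace ℝ (Fin n) → EuclideanSpace ℝ (Fin n))
    (hX : ContDiff ℝ 1 X)
    (E : EuclideanSpace ℝ (Fin n) → ℝ) (hE : ContDiff ℝ 1 E)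
    (f : EuclideanSpace ℝ (Fin n) → ℝ) (hf : Continuous f)
    (hfproper : ∀ K : Set ℝ, IsCompact K → IsCompact (f ⁻¹' K))
    (α β : ℝ) (hα : 0 ≤ α) (hβ : 0 ≤ β)
    (h1 : ∀ x, |fderiv ℝ E x (X x)| ≤ α * |E x|)
    (h2 : ∀ x, |f x| ≤ β * |E x|) :
    -- every maximal solution of `γ' t = X (γ t)`, defined on an open interval,
    -- is in fact defined on all of `ℝ`
    ∀ (γ : ℝ → EuclideanSpace ℝ (Fin n)) (s : Set ℝ),
      IsOpen s → IsPreconnected s →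
      (∀ t ∈ s, HasDerivAt γ (X (γ t)) t) →
      -- maximality: any solution extending `γ` has the same domain
      (∀ (γ' : ℝ → EuclideanSpace ℝ (Fin n)) (s' : Set ℝ),
        IsOpen s' → IsPreconnected s' → s ⊆ s' →
        (∀ t ∈ s', HasDerivAt γ' (X (γ' t)) t) → Set.EqOn γ γ' s → s' = s) →
      s = Set.univ :=
  gordon_completeness_general n X hX E hE f hfproper α β hα hβ h1 h2
end

section
/- Fix real parameters ω, ρ, λ and let ψ : (0,∞) → ℝ be twice differentiable. Define φ : (0,∞) → ℝ by φ(q) = (2q)^{1/4} · ψ((2q)^{1/2}). Then ψ satisfies the translated harmonic oscillator equation −ψ''(z) + (ω²z² + ρz + λ)ψ(z) = 0 for all z > 0 if and only if φ satisfies the Schrödinger equation −φ''(q) + (V(q) + ω²)φ(q) = 0 for all q > 0, where V(q) = ρ(2q)^{−1/2} + λ/(2q) − 3/(16q²). -/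
/-!
With `z = (2q)^{1/2}` and `φ = a · (ψ ∘ u)`, `a q = (2q)^{1/4}`, `u q = (2q)^{1/2}`, the chain rule gives
`φ'' = a'' ψ(u) + (2a'u' + a u'') ψ'(u) + a u'² ψ''(u)`. The exponent `1/4` is exactly the one that
kills the first-order coefficient `2a'u' + a u''`, and then `a u'² = a/(2q)`,
`a'' = -3a/(16q²)`. Hence the Schrödinger operator applied to `φ` at `q` equals `(2q)^{-3/4}` times
the oscillator operator applied to `ψ` at `z`, and `q ↦ (2q)^{1/2}` is a bijection of `(0, ∞)`.
-/

open Filter Topology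

lemma deriv_deriv_mul_comp {a a' u u' ψ : ℝ → ℝ} {x a'' u'' : ℝ}
    (ha : ∀ᶠ y in 𝓝 x, HasDerivAt a (a' y) y) (ha' : HasDerivAt a' a'' x)
    (hu : ∀ᶠ y in 𝓝 x, HasDerivAt u (u' y) y) (hu' : HasDerivAt u' u'' x)
    (hψ : ∀ᶠ y in 𝓝 x, DifferentiableAt ℝ ψ (u y))
    (hψ' : DifferentiableAt ℝ (deriv ψ) (u x)) :
    deriv (deriv fun y => a y * ψ (u y)) x =
      a'' * ψ (u x) + (2 * a' x * u' x + a x * u'') * deriv ψ (u x)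
        + a x * u' x ^ 2 * deriv (deriv ψ) (u x) := by
  have hfirst : deriv (fun y => a y * ψ (u y)) =ᶠ[𝓝 x]
      fun y => a' y * ψ (u y) + a y * (deriv ψ (u y) * u' y) := by
    filter_upwards [ha, hu, hψ] with y hay huy hψy
    exact (hay.mul (hψy.hasDerivAt.comp y huy)).deriv
  have hψu : HasDerivAt (fun y => ψ (u y)) (deriv ψ (u x) * u' x) x :=
    hψ.self_of_nhds.hasDerivAt.comp x hu.self_of_nhds
  have hψ'u : HasDerivAt (fun y => deriv ψ (u y)) (deriv (deriv ψ) (u x) * u' x) x :=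
    hψ'.hasDerivAt.comp x hu.self_of_nhds
  have hsecond : HasDerivAt (fun y => a' y * ψ (u y) + a y * (deriv ψ (u y) * u' y)) _ x :=
    (ha'.mul hψu).add (ha.self_of_nhds.mul (hψ'u.mul hu'))
  rw [hfirst.deriv_eq, hsecond.deriv]
  ring

lemma hasDerivAt_two_mul_rpow (r : ℝ) {y : ℝ} (hy : 0 < y) :
    HasDerivAt (fun x => (2 * x) ^ r) (r * (2 * y) ^ r / y) y := by
  have h2y : 2 * y ≠ 0 := by positivity
  refine ((Real.hasDerivAt_rpow_const (Or.inl h2y)).comp y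
    ((hasDerivAt_id y).const_mul 2)).congr_deriv ?_
  rw [Real.rpow_sub_one h2y]
  field_simp

lemma rpow_half_sq {x : ℝ} (hx : 0 ≤ x) : (x ^ (1 / 2 : ℝ)) ^ 2 = x := by
  rw [← Real.sqrt_eq_rpow, Real.sq_sqrt hx]

lemma deriv_deriv_of_eq_rpow_mul_comp {ψ φ : ℝ → ℝ}
    (hψ : ∀ z > (0 : ℝ), DifferentiableAt ℝ ψ z)
    (hψ' : ∀ z > (0 : ℝ), DifferentiableAt ℝ (deriv ψ) z)
    (hφ : ∀ q > (0 : ℝ), φ q = (2 * q) ^ ((1 : ℝ) / 4) * ψ ((2 * q) ^ ((1 : ℝ) / 2)))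
    {q : ℝ} (hq : 0 < q) :
    deriv (deriv φ) q = (2 * q) ^ ((1 : ℝ) / 4) *
      (deriv (deriv ψ) ((2 * q) ^ ((1 : ℝ) / 2)) / (2 * q)
        - 3 / (16 * q ^ 2) * ψ ((2 * q) ^ ((1 : ℝ) / 2))) := by
  have hφ_nhds : φ =ᶠ[𝓝 q] fun y => (2 * y) ^ ((1 : ℝ) / 4) * ψ ((2 * y) ^ ((1 : ℝ) / 2)) :=
    eventually_of_mem (Ioi_mem_nhds hq) hφ
  have hpow (r : ℝ) : ∀ᶠ y in 𝓝 q, HasDerivAt (fun x => (2 * x) ^ r) (r * (2 * y) ^ r / y) y :=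
    eventually_of_mem (Ioi_mem_nhds hq) fun y hy => hasDerivAt_two_mul_rpow r hy
  have hpow' (r : ℝ) : HasDerivAt (fun y => r * (2 * y) ^ r / y) _ q :=
    ((hasDerivAt_two_mul_rpow r hq).const_mul r).div (hasDerivAt_id q) hq.ne'
  have hψ_nhds : ∀ᶠ y in 𝓝 q, DifferentiableAt ℝ ψ ((2 * y) ^ ((1 : ℝ) / 2)) :=
    eventually_of_mem (Ioi_mem_nhds hq) fun y (hy : 0 < y) => hψ _ (by positivity)
  rw [hφ_nhds.deriv.deriv_eq, deriv_deriv_mul_comp (hpow _) (hpow' _) (hpow _) (hpow' _) hψ_nhds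
    (hψ' _ (by positivity))]
  have hz := rpow_half_sq (x := 2 * q) (by positivity)
  field_simp
  rw [hz]
  ring

lemma schrodinger_eq_rpow_mul_oscillator (ω ρ lam : ℝ) {ψ φ : ℝ → ℝ}
    (hψ : ∀ z > (0 : ℝ), DifferentiableAt ℝ ψ z)
    (hψ' : ∀ z > (0 : ℝ), DifferentiableAt ℝ (deriv ψ) z)
    (hφ : ∀ q > (0 : ℝ), φ q = (2 * q) ^ ((1 : ℝ) / 4) * ψ ((2 * q) ^ ((1 : ℝ) / 2)))
    {q : ℝ} (hq : 0 < q) :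
    -(deriv (deriv φ) q) +
        ((ρ * (2 * q) ^ (-(1 / 2) : ℝ) + lam / (2 * q) - 3 / (16 * q ^ 2)) + ω ^ 2) * φ q =
      (2 * q) ^ ((1 : ℝ) / 4) / (2 * q) *
        (-(deriv (deriv ψ) ((2 * q) ^ ((1 : ℝ) / 2))) +
          (ω ^ 2 * ((2 * q) ^ ((1 : ℝ) / 2)) ^ 2 + ρ * (2 * q) ^ ((1 : ℝ) / 2) + lam) *
            ψ ((2 * q) ^ ((1 : ℝ) / 2))) := by
  have hz := rpow_half_sq (x := 2 * q) (by positivity)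
  have hz_inv : ((2 * q) ^ ((1 : ℝ) / 2))⁻¹ = (2 * q) ^ ((1 : ℝ) / 2) / (2 * q) := by
    field_simp
    exact hz.symm
  rw [deriv_deriv_of_eq_rpow_mul_comp hψ hψ' hφ hq, hφ q hq, Real.rpow_neg (by positivity),
    hz_inv, hz]
  field_simp
  ring

/-- The Schrödinger equation with the potential
`V q = ρ (2q)^{−1/2} + λ/(2q) − 3/(16 q²)` (energy shifted by `ω²`) is equivalent, under the
substitution `φ q = (2q)^{1/4} ψ((2q)^{1/2})`, to the translated harmonic oscillator equation
`−ψ'' + (ω² z² + ρ z + λ) ψ = 0`. -/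
theorem coulomb_like_reduces_to_translated_harmonic_oscillator
    (ω ρ lam : ℝ) (ψ : ℝ → ℝ)
    -- `ψ` is twice differentiable on `(0, ∞)`
    (hψ : ∀ z > (0 : ℝ), DifferentiableAt ℝ ψ z)
    (hψ' : ∀ z > (0 : ℝ), DifferentiableAt ℝ (deriv ψ) z)
    (φ : ℝ → ℝ)
    -- `φ q = (2q)^{1/4} · ψ((2q)^{1/2})` on `(0, ∞)`
    (hφ : ∀ q > (0 : ℝ), φ q = (2 * q) ^ ((1 : ℝ) / 4) * ψ ((2 * q) ^ ((1 : ℝ) / 2))) :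
    -- translated harmonic oscillator equation for `ψ` …
    (∀ z > (0 : ℝ), -(deriv (deriv ψ) z) + (ω ^ 2 * z ^ 2 + ρ * z + lam) * ψ z = 0) ↔
    -- … iff Schrödinger equation with potential `V` and energy shift `ω²` for `φ`
    (∀ q > (0 : ℝ), -(deriv (deriv φ) q) +
      ((ρ * (2 * q) ^ (-(1 / 2) : ℝ) + lam / (2 * q) - 3 / (16 * q ^ 2)) + ω ^ 2) * φ q
        = 0) := by
  have key q (hq : 0 < q) := schrodinger_eq_rpow_mul_oscillator ω ρ lam hψ hψ' hφ hq
  constructor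
  · intro hosc q hq
    rw [key q hq, hosc _ (by positivity), mul_zero]
  · intro hschr z hz
    have hq : 0 < z ^ 2 / 2 := by positivity
    have hzq : (2 * (z ^ 2 / 2)) ^ ((1 : ℝ) / 2) = z := by
      rw [mul_div_cancel₀ _ two_ne_zero, ← Real.sqrt_eq_rpow, Real.sqrt_sq hz.le]
    have h := key _ hq
    rw [hschr _ hq, hzq] at h
    exact (mul_eq_zero.mp h.symm).resolve_left (by positivity)
end
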